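/- arXiv:1110.0568 — 3 statements merged into one kernel-verified Lean document; each statement's English description precedes it below -/
import Mathlib

section
/- There exist nonempty compact convex sets A₁, A₂, A₃ ⊆ ℝ³ and nonnegative real numbers V_I indexed by multi-indices I = (i₁,i₂,i₃) ∈ ℤ≥0³ with i₁+i₂+i₃ = 3, such that for all λ₁, λ₂, λ₃ ≥ 0 the Lebesgue measure of λ₁•A₁ + λ₂•A₂ + λ₃•A₃ equals Σ_{i₁+i₂+i₃=3} (3!/(i₁! i₂! i₃!)) · V_{(i₁,i₂,i₃)} · λ₁^{i₁} λ₂^{i₂} λ₃^{i₃}, and such that V_{(1,1,1)}³ < V_{(2,1,0)} · V_{(0,2,1)} · V_{(1,0,2)}. (In mixed-volume notation: V(A₁,A₂,A₃)³ < V(A₁,A₁,A₂)·V(A₂,A₂,A₃)·V(A₃,A₃,A₁), giving a negative answer to Gromov's question of whether I ↦ log V_I is concave on the discrete simplex.) -/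
open Pointwise MeasureTheory

/-!
Take for `A_k` the boxes `[0, a_k] ⊆ ℝ³` with side vectors `a₁ = (1,2,0)`, `a₂ = (0,1,1)`,
`a₃ = (1,0,1)`. Minkowski sums and nonnegative dilates of such boxes are again boxes, so
`vol (l₁ A₁ + l₂ A₂ + l₃ A₃) = ∏ᵢ (l₁ a₁ᵢ + l₂ a₂ᵢ + l₃ a₃ᵢ) = (l₁ + l₃)(2 l₁ + l₂)(l₂ + l₃)`,
and the mixed volumes are the coefficients of this cubic divided by the multinomial coefficients.
They give `V(A₁,A₂,A₃) = 1/2` and `V(A₁,A₁,A₂) = 2/3`, `V(A₂,A₂,A₃) = 1/3`, `V(A₃,A₃,A₁) = 2/3`,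
and `(1/2)³ = 1/8 < 4/27`.
-/

namespace Set

variable {ι : Type*}

theorem univ_pi_add_univ_pi {α : ι → Type*} [∀ i, Add (α i)] (s t : ∀ i, Set (α i)) :
    univ.pi s + univ.pi t = univ.pi (s + t) := by
  ext x
  constructor
  · rintro ⟨a, ha, b, hb, rfl⟩ i -
    exact ⟨a i, ha i trivial, b i, hb i trivial, rfl⟩
  · intro hx
    choose a ha b hb hab using fun i => hx i trivial
    exact ⟨a, fun i _ => ha i, b, fun i _ => hb i, funext hab⟩

theorem Icc_add_Icc_pi {α : Type*} [AddCommMonoid α] [LinearOrder α] [IsOrderedAddMonoid α]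
    [AddLeftReflectLE α] [ExistsAddOfLE α] {a b c d : ι → α} (hab : a ≤ b) (hcd : c ≤ d) :
    Icc a b + Icc c d = Icc (a + c) (b + d) := by
  simp only [← pi_univ_Icc, univ_pi_add_univ_pi]
  exact congrArg _ (funext fun i => Icc_add_Icc (hab i) (hcd i))

section Field

variable {K : Type*} [Field K] [LinearOrder K] [IsStrictOrderedRing K]

theorem smul_Icc_of_nonneg {r a b : K} (hr : 0 ≤ r) (hab : a ≤ b) :
    r • Icc a b = Icc (r * a) (r * b) := by
  rcases hr.eq_or_lt with rfl | hr
  · simp [zero_smul_set (nonempty_Icc.2 hab), Icc_self, singleton_zero]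
  · exact LinearOrderedField.smul_Icc hr

theorem smul_Icc_pi_of_nonneg {r : K} {a b : ι → K} (hr : 0 ≤ r) (hab : a ≤ b) :
    r • Icc a b = Icc (r • a) (r • b) := by
  simp only [← pi_univ_Icc, smul_set_univ_pi]
  exact congrArg _ (funext fun i => smul_Icc_of_nonneg hr (hab i))

theorem smul_Icc_zero_pi {r : K} {a : ι → K} (hr : 0 ≤ r) (ha : 0 ≤ a) :
    r • Icc 0 a = Icc 0 (r • a) := by
  rw [smul_Icc_pi_of_nonneg hr ha, smul_zero]

end Field

end Set

open Set

theorem Real.volume_Icc_zero_pi {ι : Type*} [Fintype ι] {a : ι → ℝ} (ha : 0 ≤ a) :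
    volume (Icc 0 a) = ENNReal.ofReal (∏ i, a i) := by
  rw [Real.volume_Icc_pi, ENNReal.ofReal_prod_of_nonneg fun i _ => ha i]
  simp

theorem Real.volume_smul_Icc_zero_add_smul_add_smul {ι : Type*} [Fintype ι] {a b c : ι → ℝ}
    {l₁ l₂ l₃ : ℝ} (h₁ : 0 ≤ l₁) (h₂ : 0 ≤ l₂) (h₃ : 0 ≤ l₃) (ha : 0 ≤ a) (hb : 0 ≤ b)
    (hc : 0 ≤ c) :
    volume (l₁ • Icc 0 a + l₂ • Icc 0 b + l₃ • Icc 0 c) =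
      ENNReal.ofReal (∏ i, (l₁ * a i + l₂ * b i + l₃ * c i)) := by
  have hab : 0 ≤ l₁ • a + l₂ • b := add_nonneg (smul_nonneg h₁ ha) (smul_nonneg h₂ hb)
  rw [smul_Icc_zero_pi h₁ ha, smul_Icc_zero_pi h₂ hb, smul_Icc_zero_pi h₃ hc,
    Icc_add_Icc_pi (smul_nonneg h₁ ha) (smul_nonneg h₂ hb), add_zero,
    Icc_add_Icc_pi hab (smul_nonneg h₃ hc), add_zero,
    Real.volume_Icc_zero_pi (add_nonneg hab (smul_nonneg h₃ hc))]
  simp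

theorem Finset.Nat.sum_antidiagonalTuple_three_three {M : Type*} [AddCommMonoid M]
    (f : (Fin 3 → ℕ) → M) :
    ∑ I ∈ antidiagonalTuple 3 3, f I =
      f ![3, 0, 0] + f ![0, 3, 0] + f ![0, 0, 3] + f ![2, 1, 0] + f ![2, 0, 1] +
        f ![1, 2, 0] + f ![0, 2, 1] + f ![1, 0, 2] + f ![0, 1, 2] + f ![1, 1, 1] := by
  rw [show antidiagonalTuple 3 3 = {![3, 0, 0], ![0, 3, 0], ![0, 0, 3], ![2, 1, 0], ![2, 0, 1],
    ![1, 2, 0], ![0, 2, 1], ![1, 0, 2], ![0, 1, 2], ![1, 1, 1]} by decide]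
  simp +decide only [sum_insert, mem_insert, mem_singleton, sum_singleton]
  abel

/-- `boxMixedVolume i j k` is the coefficient of `l₁^i l₂^j l₃^k` in
`(l₁ + l₃)(2 l₁ + l₂)(l₂ + l₃)` divided by `3! / (i! j! k!)`. -/
noncomputable def boxMixedVolume : ℕ → ℕ → ℕ → ℝ
  | 2, 1, 0 => 2 / 3
  | 2, 0, 1 => 2 / 3
  | 1, 2, 0 => 1 / 3
  | 1, 1, 1 => 1 / 2
  | 1, 0, 2 => 2 / 3
  | 0, 2, 1 => 1 / 3
  | 0, 1, 2 => 1 / 3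
  | _, _, _ => 0

theorem boxMixedVolume_nonneg (i j k : ℕ) : 0 ≤ boxMixedVolume i j k := by
  unfold boxMixedVolume
  split <;> norm_num

theorem boxMixedVolume_expansion (l₁ l₂ l₃ : ℝ) :
    ∏ i, (l₁ * ![1, 2, 0] i + l₂ * ![0, 1, 1] i + l₃ * ![1, 0, 1] i) =
      ∑ I ∈ Finset.Nat.antidiagonalTuple 3 3,
        ((Nat.factorial 3 : ℝ) /
            ((Nat.factorial (I 0) : ℝ) * (Nat.factorial (I 1) : ℝ) * (Nat.factorial (I 2) : ℝ))) *
          boxMixedVolume (I 0) (I 1) (I 2) * l₁ ^ (I 0) * l₂ ^ (I 1) * l₃ ^ (I 2) := by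
  simp only [Finset.Nat.sum_antidiagonalTuple_three_three, Fin.prod_univ_three, boxMixedVolume,
    Matrix.cons_val, Nat.factorial]
  norm_num
  ring

theorem boxMixedVolume_cube_lt :
    boxMixedVolume 1 1 1 ^ 3 <
      boxMixedVolume 2 1 0 * boxMixedVolume 0 2 1 * boxMixedVolume 1 0 2 := by
  norm_num [boxMixedVolume]

/-- Negative answer to Gromov's question: there are nonempty compact convex bodies
`A₁, A₂, A₃ ⊆ ℝ³` whose mixed volumes `V_I` (defined via Minkowski's polynomial expansion
of the volume of `λ₁•A₁ + λ₂•A₂ + λ₃•A₃`) satisfy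
`V(A₁,A₂,A₃)³ < V(A₁,A₁,A₂) · V(A₂,A₂,A₃) · V(A₃,A₃,A₁)`. -/
theorem gromov_question_negative_answer :
    ∃ (A₁ A₂ A₃ : Set (Fin 3 → ℝ)) (V : (Fin 3 → ℕ) → ℝ),
      A₁.Nonempty ∧ IsCompact A₁ ∧ Convex ℝ A₁ ∧
      A₂.Nonempty ∧ IsCompact A₂ ∧ Convex ℝ A₂ ∧
      A₃.Nonempty ∧ IsCompact A₃ ∧ Convex ℝ A₃ ∧
      (∀ I ∈ Finset.Nat.antidiagonalTuple 3 3, 0 ≤ V I) ∧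
      (∀ l₁ l₂ l₃ : ℝ, 0 ≤ l₁ → 0 ≤ l₂ → 0 ≤ l₃ →
        volume (l₁ • A₁ + l₂ • A₂ + l₃ • A₃) =
          ENNReal.ofReal (∑ I ∈ Finset.Nat.antidiagonalTuple 3 3,
            ((Nat.factorial 3 : ℝ) /
                ((Nat.factorial (I 0) : ℝ) * (Nat.factorial (I 1) : ℝ) *
                  (Nat.factorial (I 2) : ℝ))) *
              V I * l₁ ^ (I 0) * l₂ ^ (I 1) * l₃ ^ (I 2))) ∧
      V ![1, 1, 1] ^ 3 < V ![2, 1, 0] * V ![0, 2, 1] * V ![1, 0, 2] := by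
  have ha₁ : (0 : Fin 3 → ℝ) ≤ ![1, 2, 0] := fun i => by fin_cases i <;> norm_num
  have ha₂ : (0 : Fin 3 → ℝ) ≤ ![0, 1, 1] := fun i => by fin_cases i <;> norm_num
  have ha₃ : (0 : Fin 3 → ℝ) ≤ ![1, 0, 1] := fun i => by fin_cases i <;> norm_num
  refine ⟨Icc 0 ![1, 2, 0], Icc 0 ![0, 1, 1], Icc 0 ![1, 0, 1],
    fun I => boxMixedVolume (I 0) (I 1) (I 2),
    nonempty_Icc.2 ha₁, isCompact_Icc, convex_Icc _ _,
    nonempty_Icc.2 ha₂, isCompact_Icc, convex_Icc _ _,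
    nonempty_Icc.2 ha₃, isCompact_Icc, convex_Icc _ _,
    fun I _ => boxMixedVolume_nonneg _ _ _, fun l₁ l₂ l₃ h₁ h₂ h₃ => ?_, boxMixedVolume_cube_lt⟩
  rw [Real.volume_smul_Icc_zero_add_smul_add_smul h₁ h₂ h₃ ha₁ ha₂ ha₃, boxMixedVolume_expansion]
end

section
/- Let n ≥ 1 and let (a_{ij}) be an n × n matrix over a commutative ring. In the multivariate polynomial ∏_{j=1}^n (Σ_{i=1}^n a_{ij} X_i) in variables X₁, …, X_n, the coefficient of the monomial X₁ X₂ ⋯ X_n equals the permanent of the matrix (a_{ij}), i.e., Σ_{σ ∈ S_n} ∏_{j=1}^n a_{σ(j) j}. (Consequently, the mixed volume of the n axis-parallel boxes A_i = ∏_j [0, a_{ij}] equals perm(a)/n!.) -/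
/-!
Expanding the product of the linear forms `∑ i, a i j • X i` chooses a row `g j` for every column
`j` and produces the monomial `∏ j, X (g j)` with coefficient `∏ j, a (g j) j`. That monomial is
`X₁ ⋯ X_n` exactly when every variable is chosen once, i.e. when `g` is a permutation.
-/

open MvPolynomial Finset Function

theorem Finsupp.sum_single_one_comp_apply {ι κ : Type*} [Fintype κ] [DecidableEq ι]
    (g : κ → ι) (i : ι) :
    (∑ j, single (g j) 1) i = #{j | g j = i} := by
  simp only [finsetSum_apply, single_apply, card_filter]

theorem Finsupp.sum_single_one_comp_eq_iff_bijective {ι κ : Type*} [Fintype ι] [Fintype κ]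
    [DecidableEq ι] (g : κ → ι) :
    ∑ j, single (g j) 1 = ∑ i, single i 1 ↔ Bijective g := by
  rw [bijective_iff_existsUnique, Finsupp.ext_iff]
  refine forall_congr' fun i => ?_
  rw [sum_single_one_comp_apply, finsetSum_apply, univ_sum_single_apply',
    Fintype.existsUnique_iff_card_one]

theorem Fintype.sum_bijective_eq_sum_equiv {M ι κ : Type*} [Fintype ι] [Fintype κ]
    [DecidableEq ι] [DecidableEq κ] [AddCommMonoid M] (f : (κ → ι) → M) :
    ∑ g : κ → ι with Bijective g, f g = ∑ e : κ ≃ ι, f e := by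
  rw [Finset.sum_subtype _ fun _ => mem_filter_univ _]
  exact Fintype.sum_equiv Equiv.bijectiveEquiv _ _ fun _ => rfl

namespace MvPolynomial

variable {R ι : Type*} [CommSemiring R] [Fintype ι] [DecidableEq ι]

theorem coeff_prod_sum_C_mul_X {κ : Type*} [Fintype κ] [DecidableEq κ]
    (a : Matrix ι κ R) (d : ι →₀ ℕ) :
    coeff d (∏ j, ∑ i, C (a i j) * X i) =
      ∑ g : κ → ι with ∑ j, Finsupp.single (g j) 1 = d, ∏ j, a (g j) j := by
  simp_rw [C_mul_X_eq_monomial, prod_univ_sum, Fintype.piFinset_univ, ← monomial_sum_prod,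
    coeff_sum, coeff_monomial, sum_filter]

theorem coeff_prod_sum_C_mul_X_eq_permanent (a : Matrix ι ι R) :
    coeff (∑ i, Finsupp.single i 1) (∏ j, ∑ i, C (a i j) * X i) = a.permanent := by
  rw [coeff_prod_sum_C_mul_X]
  simp_rw [Finsupp.sum_single_one_comp_eq_iff_bijective]
  exact Fintype.sum_bijective_eq_sum_equiv _

end MvPolynomial

theorem coeff_prod_sum_eq_permanent_general
    (n : ℕ) (R : Type*) [CommRing R] (a : Matrix (Fin n) (Fin n) R) :
    MvPolynomial.coeff (∑ i : Fin n, Finsupp.single i 1)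
        (∏ j : Fin n, ∑ i : Fin n, MvPolynomial.C (a i j) * MvPolynomial.X i) =
      ∑ σ : Equiv.Perm (Fin n), ∏ j : Fin n, a (σ j) j :=
  coeff_prod_sum_C_mul_X_eq_permanent a

/-- In the multivariate polynomial `∏ j, ∑ i, a i j • X i` over a commutative ring,
the coefficient of the monomial `X₁ X₂ ⋯ X_n` equals the permanent
`∑ σ ∈ S_n, ∏ j, a (σ j) j` of the matrix `a`. -/
theorem coeff_prod_sum_eq_permanent
    (n : ℕ) (hn : 1 ≤ n) (R : Type*) [CommRing R] (a : Matrix (Fin n) (Fin n) R) :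
    MvPolynomial.coeff (∑ i : Fin n, Finsupp.single i 1)
        (∏ j : Fin n, ∑ i : Fin n, MvPolynomial.C (a i j) * MvPolynomial.X i) =
      ∑ σ : Equiv.Perm (Fin n), ∏ j : Fin n, a (σ j) j :=
  coeff_prod_sum_eq_permanent_general n R a
end

section
/- The permanent of the 3 × 3 real matrix with rows (1, 1, 0), (1, 0, 5), (0, 1/3, 1) equals 8/3, and (8/3 / 3!)³ < (5/3) · (5/9) · (1/9); that is, the mixed volumes V(A₁,A₂,A₃) = 4/9, V(A₁,A₁,A₂) = 5/3, V(A₂,A₂,A₃) = 5/9, V(A₃,A₃,A₁) = 1/9 of the boxes A₁ = [0,1]×[0,1]×{0}, A₂ = [0,1]×{0}×[0,5], A₃ = {0}×[0,1/3]×[0,1] satisfy V(A₁,A₂,A₃)³ < V(A₁,A₁,A₂)·V(A₂,A₂,A₃)·V(A₃,A₃,A₁). -/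
open Equiv Finset

namespace Matrix

theorem permanent_fin_three {R : Type*} [CommSemiring R] (A : Matrix (Fin 3) (Fin 3) R) :
    A.permanent =
      A 0 0 * A 1 1 * A 2 2 + A 0 0 * A 1 2 * A 2 1
      + A 0 1 * A 1 0 * A 2 2 + A 0 1 * A 1 2 * A 2 0
      + A 0 2 * A 1 0 * A 2 1 + A 0 2 * A 1 1 * A 2 0 := by
  simp only [permanent, univ_perm_fin_succ, ← univ_product_univ, sum_map, sum_product,
    toEmbedding_apply, Fin.prod_univ_succ, Fin.sum_univ_succ, Perm.decomposeFin_symm_apply_zero,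
    Perm.decomposeFin_symm_apply_succ, univ_unique, sum_singleton]
  simp (disch := decide) only [Fin.succ_zero_eq_one, Fin.succ_one_eq_two, Fin.default_eq_zero,
    Perm.default_eq, Perm.coe_one, id_eq, prod_singleton, swap_self, refl_apply, swap_apply_right,
    swap_apply_of_ne_of_ne]
  ring

theorem permanent_fin_three_of {R : Type*} [CommSemiring R] (a b c d e f g h i : R) :
    permanent !![a, b, c; d, e, f; g, h, i] =
      a * e * i + a * f * h + b * d * i + b * f * g + c * d * h + c * e * g :=
  permanent_fin_three _

end Matrix

/-- The permanent of the matrix with rows `(1,1,0)`, `(1,0,5)`, `(0,1/3,1)` equals `8/3`,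
and `(8/3 / 3!)³ < (5/3) · (5/9) · (1/9)`; i.e. the mixed volumes
`V(A₁,A₂,A₃) = (8/3)/3! = 4/9`, `V(A₁,A₁,A₂) = 5/3`, `V(A₂,A₂,A₃) = 5/9`,
`V(A₃,A₃,A₁) = 1/9` of the corresponding axis-parallel boxes satisfy
`V(A₁,A₂,A₃)³ < V(A₁,A₁,A₂) · V(A₂,A₂,A₃) · V(A₃,A₃,A₁)`. -/
theorem permanent_example_and_gromov_inequality_failure
    (a : Matrix (Fin 3) (Fin 3) ℝ) (ha : a = !![1, 1, 0; 1, 0, 5; 0, 1/3, 1]) :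
    (∑ σ : Equiv.Perm (Fin 3), ∏ j : Fin 3, a (σ j) j) = 8 / 3 ∧
      ((8 / 3 : ℝ) / (Nat.factorial 3 : ℝ)) ^ 3 < (5 / 3) * (5 / 9) * (1 / 9) := by
  subst ha
  constructor
  · rw [← Matrix.permanent, Matrix.permanent_fin_three_of]
    norm_num
  · -- `(4/9)³ = 64/729 < 75/729`
    norm_num [Nat.factorial]
end
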